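/- Let Ω be a finite set with k := |Ω| > 1 and let N ⊆ Δ^k. Then there exists a sequence ω = (ω_1, ω_2, …) ∈ Ω^ℕ such that CP(n ↦ r_n(ω)) = N if and only if N is a nonempty closed connected subset of Δ^k. -/

import Mathlib

open MeasureTheory Filter Topology

noncomputable section

/-- The set of probability vectors over a finite set `Ω`, i.e. the standard simplex
inside the Euclidean space `ℝ^Ω`. -/
def probVec (Ω : Type*) [Fintype Ω] : Set (EuclideanSpace ℝ Ω) :=
  {p | (∀ x, 0 ≤ p x) ∧ ∑ x, p x = 1}

/-- The relative-frequency vector of the first `n` terms of `ω`. -/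
def relFreq {Ω : Type*} [Fintype Ω] [DecidableEq Ω] (ω : ℕ → Ω) (n : ℕ) :
    EuclideanSpace ℝ Ω :=
  WithLp.toLp 2 (fun x => (((Finset.range n).filter fun i => ω i = x).card : ℝ) / n)

/-- The set of cluster points of a sequence in a topological space. -/
def clusterPts {X : Type*} [TopologicalSpace X] (a : ℕ → X) : Set X :=
  {c | MapClusterPt c atTop a}

/-- Cesàro averages of a sequence of vectors. -/
def cesaro {Ω : Type*} [Fintype Ω] (m : ℕ → EuclideanSpace ℝ Ω) (n : ℕ) :
    EuclideanSpace ℝ Ω :=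
  (n : ℝ)⁻¹ • ∑ i ∈ Finset.range n, m i

/-- `μ` is the infinite (Ionescu-Tulcea) independent product of the probability vectors `m i`,
characterized by its values on cylinder sets. -/
def IsIT {Ω : Type*} [Fintype Ω] [MeasurableSpace Ω] (m : ℕ → EuclideanSpace ℝ Ω)
    (μ : Measure (ℕ → Ω)) : Prop :=
  ∀ (n : ℕ) (x : Fin n → Ω),
    μ {ω | ∀ i : Fin n, ω (i : ℕ) = x i} = ∏ i : Fin n, ENNReal.ofReal (m i.val (x i))

end

/-!
The relative frequencies are the Cesàro averages of the unit vectors `e (ω i)`, so from time `1` on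
they lie in the simplex and move by `O(1/n)` per step. The cluster set of a sequence in a compact
set whose steps tend to zero is connected: if it split into two separated closed pieces, the
sequence would cross the gap between them infinitely often, producing a cluster point in the gap.

Conversely, a connected `N` joins any two of its points by `ε`-chains; concatenating
`1/(j+1)`-chains through a dense sequence of `N` gives a sequence `y` in `N` with steps tending to
zero that clusters at every point of `N`. Holding the target `y j` on the block
`[(j+1)!, (j+2)!)` makes the Cesàro averages of the targets track `y`, and emitting greedily the
symbol whose accumulated target mass most exceeds its count keeps all counts within a bounded
distance of those masses, so the relative frequencies have the same cluster points as the averages.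
-/

open Metric Set Finset

theorem isClosed_clusterPts {X : Type*} [TopologicalSpace X] (a : ℕ → X) :
    IsClosed (clusterPts a) :=
  isClosed_setOfPred_clusterPt

section ClusterPoints

variable {X : Type*} [PseudoMetricSpace X]

theorem MapClusterPt.of_tendsto_dist {ι : Type*} {l : Filter ι} {a b : ι → X} {p : X}
    (hp : MapClusterPt p l a) (hab : Tendsto (fun n => dist (a n) (b n)) l (𝓝 0)) :
    MapClusterPt p l b := by
  rw [nhds_basis_ball.mapClusterPt_iff_frequently] at hp ⊢
  intro ε hε
  refine ((hp (ε / 2) (half_pos hε)).and_eventually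
    (hab.eventually (gt_mem_nhds (half_pos hε)))).mono fun n ⟨hpa, hab⟩ => ?_
  rw [mem_ball] at hpa ⊢
  linarith [dist_triangle_left (b n) p (a n)]

theorem clusterPts_eq_of_tendsto_dist {a b : ℕ → X}
    (hab : Tendsto (fun n => dist (a n) (b n)) atTop (𝓝 0)) : clusterPts a = clusterPts b := by
  have hba : Tendsto (fun n => dist (b n) (a n)) atTop (𝓝 0) := by simpa only [dist_comm] using hab
  ext p
  exact ⟨fun hp => hp.of_tendsto_dist hab, fun hp => hp.of_tendsto_dist hba⟩

end ClusterPoints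

theorem frequently_mem_Icc_of_frequently_le_of_frequently_ge {u : ℕ → ℝ} {a b : ℝ} (hab : a ≤ b)
    (hstep : ∀ᶠ n in atTop, u (n + 1) ≤ u n + (b - a))
    (hlo : ∃ᶠ n in atTop, u n ≤ a) (hhi : ∃ᶠ n in atTop, b ≤ u n) :
    ∃ᶠ n in atTop, u n ∈ Icc a b := by
  rw [frequently_atTop]
  intro M
  obtain ⟨M', hM'⟩ := eventually_atTop.1 hstep
  obtain ⟨n, hn, hun⟩ := frequently_atTop.1 hlo (max M M')
  obtain ⟨m, hm, hum⟩ := frequently_atTop.1 hhi n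
  have hex : ∃ k, a ≤ u (n + k) := ⟨m - n, by rw [Nat.add_sub_cancel' hm]; linarith⟩
  -- the first time `u` climbs back above `a` it cannot have overshot `b`
  refine ⟨n + Nat.find hex, by omega, Nat.find_spec hex, ?_⟩
  rcases hk : Nat.find hex with _ | k
  · simpa using hun.trans hab
  · have hprev : u (n + k) < a := not_le.1 (Nat.find_min hex (by omega))
    have := hM' (n + k) (by omega)
    rw [← add_assoc]
    linarith

theorem isConnected_clusterPts_of_tendsto_dist_succ {X : Type*} [MetricSpace X]
    {K : Set X} {a : ℕ → X} (hK : IsCompact K) (haK : ∀ᶠ n in atTop, a n ∈ K)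
    (hstep : Tendsto (fun n => dist (a (n + 1)) (a n)) atTop (𝓝 0)) :
    IsConnected (clusterPts a) := by
  set L := clusterPts a
  have hLK : L ⊆ K := fun z hz => hK.isClosed.mem_of_mapClusterPt hz haK
  have hLc : IsCompact L := hK.of_isClosed_subset (isClosed_clusterPts a) hLK
  refine ⟨hK.exists_mapClusterPt_of_frequently haK.frequently |>.imp fun _ h => h.2,
    isPreconnected_closed_iff.2 ?_⟩
  rintro A B hA hB hcover ⟨p, hpL, hpA⟩ ⟨q, hqL, hqB⟩
  by_contra hdisj
  set f := fun x => infDist x (L ∩ A)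
  have hA' : IsClosed (L ∩ A) := (isClosed_clusterPts a).inter hA
  obtain ⟨z₀, hz₀, hmin⟩ := (hLc.inter_right hB).exists_isMinOn ⟨q, hqL, hqB⟩
    (continuous_infDist_pt (L ∩ A)).continuousOn
  set δ := f z₀
  have hδ : 0 < δ := (hA'.notMem_iff_infDist_pos ⟨p, hpL, hpA⟩).1
    fun hz => hdisj ⟨z₀, hz.1, hz.2, hz₀.2⟩
  have hfB : ∀ x ∈ L ∩ B, δ ≤ f x := fun x hx => hmin hx
  have hlo : ∃ᶠ n in atTop, f (a n) ≤ δ / 3 :=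
    (hpL.frequently (ball_mem_nhds p (by positivity : (0 : ℝ) < δ / 3))).mono fun n hn =>
      (infDist_le_dist_of_mem (show p ∈ L ∩ A from ⟨hpL, hpA⟩)).trans (mem_ball.1 hn).le
  have hhi : ∃ᶠ n in atTop, 2 * δ / 3 ≤ f (a n) :=
    (hqL.frequently (ball_mem_nhds q (by positivity : (0 : ℝ) < δ / 3))).mono fun n hn => by
      have := infDist_le_infDist_add_dist (x := q) (y := a n) (s := L ∩ A)
      linarith [hfB q ⟨hqL, hqB⟩, mem_ball'.1 hn]
  have hfstep : ∀ᶠ n in atTop, f (a (n + 1)) ≤ f (a n) + (2 * δ / 3 - δ / 3) :=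
    (hstep.eventually (gt_mem_nhds (by positivity : (0 : ℝ) < δ / 3))).mono fun n hn => by
      linarith [infDist_le_infDist_add_dist (x := a (n + 1)) (y := a n) (s := L ∩ A)]
  have hmid := (frequently_mem_Icc_of_frequently_le_of_frequently_ge (by linarith) hfstep hlo hhi).and_eventually haK
  obtain ⟨z, ⟨-, hzI : f z ∈ Icc (δ / 3) (2 * δ / 3)⟩, hz⟩ := (hK.inter_right (isClosed_Icc.preimage
    (continuous_infDist_pt (L ∩ A)))).exists_mapClusterPt_of_frequently
    (hmid.mono fun n hn => ⟨hn.2, hn.1⟩)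
  rcases hcover hz with hzA | hzB
  · linarith [hzI.1, infDist_zero_of_mem (show z ∈ L ∩ A from ⟨hz, hzA⟩)]
  · linarith [hzI.2, hfB z ⟨hz, hzB⟩]

theorem Relation.ReflTransGen.exists_eventually_const_seq {α : Type*} {r : α → α → Prop}
    {a b : α} (hr : ∀ x, r x x) (h : Relation.ReflTransGen r a b) :
    ∃ (f : ℕ → α) (L : ℕ), f 0 = a ∧ (∀ i, L ≤ i → f i = b) ∧ ∀ i, r (f i) (f (i + 1)) := by
  induction h with
  | refl => exact ⟨fun _ => a, 0, rfl, fun _ _ => rfl, fun _ => hr a⟩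
  | @tail b c _ hbc ih =>
    obtain ⟨f, L, hf0, hfL, hf⟩ := ih
    refine ⟨fun i => if i ≤ L then f i else c, L + 1, by simp [hf0], fun i hi => by
      simp [show ¬ i ≤ L by omega], fun i => ?_⟩
    rcases lt_trichotomy i L with hi | rfl | hi
    · simpa [hi.le, Nat.succ_le_of_lt hi] using hf i
    · simpa [hfL i le_rfl] using hbc
    · simpa [show ¬ i ≤ L by omega, show ¬ i + 1 ≤ L by omega] using hr c

theorem PreconnectedSpace.reflTransGen_dist_lt {X : Type*} [PseudoMetricSpace X]
    [PreconnectedSpace X] {ε : ℝ} (hε : 0 < ε) (x y : X) :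
    Relation.ReflTransGen (fun a b => dist a b < ε) x y :=
  PreconnectedSpace.induction₂' _ (fun x => Filter.eventually_of_mem (ball_mem_nhds x hε)
      fun _ hy => ⟨.single (mem_ball'.1 hy), .single (mem_ball.1 hy)⟩)
    ⟨fun _ _ _ => Relation.ReflTransGen.trans⟩ x y

/-- The `j` with `T j ≤ n < T (j + 1)`; it is `0` when `n < T 0`. -/
def blockIndex (T : ℕ → ℕ) (n : ℕ) : ℕ := Nat.findGreatest (fun j => T j ≤ n) n

section BlockIndex

variable {T : ℕ → ℕ} (hT : StrictMono T)
include hT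

theorem le_blockIndex {j n : ℕ} (h : T j ≤ n) : j ≤ blockIndex T n :=
  Nat.le_findGreatest ((hT.id_le j).trans h) h

theorem blockIndex_spec {n : ℕ} (h : T 0 ≤ n) :
    T (blockIndex T n) ≤ n ∧ n < T (blockIndex T n + 1) := by
  refine ⟨Nat.findGreatest_spec (P := fun j => T j ≤ n) (Nat.zero_le n) h, not_le.1 fun hn => ?_⟩
  have := le_blockIndex hT hn
  omega

theorem blockIndex_eq {j n : ℕ} (h₁ : T j ≤ n) (h₂ : n < T (j + 1)) : blockIndex T n = j := by
  obtain ⟨hlo, hhi⟩ := blockIndex_spec hT ((hT.monotone (Nat.zero_le j)).trans h₁)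
  have h₃ := hT.lt_iff_lt.1 (hlo.trans_lt h₂)
  have h₄ := hT.lt_iff_lt.1 (h₁.trans_lt hhi)
  omega

theorem blockIndex_apply (j : ℕ) : blockIndex T (T j) = j :=
  blockIndex_eq hT le_rfl (hT (Nat.lt_succ_self j))

theorem tendsto_blockIndex : Tendsto (blockIndex T) atTop atTop :=
  tendsto_atTop_atTop.2 fun j => ⟨T j, fun _ => le_blockIndex hT⟩

end BlockIndex

theorem exists_seq_tendsto_dist_succ_forall_mapClusterPt (X : Type*) [PseudoMetricSpace X]
    [TopologicalSpace.SeparableSpace X] [PreconnectedSpace X] [Nonempty X] :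
    ∃ y : ℕ → X, Tendsto (fun n => dist (y (n + 1)) (y n)) atTop (𝓝 0) ∧
      ∀ p, MapClusterPt p atTop y := by
  obtain ⟨u, hu⟩ := TopologicalSpace.exists_dense_seq X
  -- `q` visits every `u i` infinitely often; consecutive `q j` are joined by `1/(j+1)`-chains
  set q : ℕ → X := fun j => u j.unpair.1
  have hε : ∀ j : ℕ, (0 : ℝ) < 1 / (j + 1) := fun _ => Nat.one_div_pos_of_nat
  choose f L hf0 hfL hf using fun j =>
    (PreconnectedSpace.reflTransGen_dist_lt (hε j) (q j) (q (j + 1))).exists_eventually_const_seq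
      fun x => (dist_self x).symm ▸ hε j
  set T : ℕ → ℕ := fun j => ∑ i ∈ range j, (L i + 1)
  have hT_succ : ∀ j, T (j + 1) = T j + L j + 1 := fun j => by simp [T, sum_range_succ]; omega
  have hT : StrictMono T := strictMono_nat_of_lt_succ fun j => by have := hT_succ j; omega
  set y : ℕ → X := fun n => f (blockIndex T n) (n - T (blockIndex T n)) with hy
  have hy_succ : ∀ n, y (n + 1) = f (blockIndex T n) (n - T (blockIndex T n) + 1) := by
    intro n
    obtain ⟨hlo, hhi⟩ := blockIndex_spec hT (Nat.zero_le n)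
    show f (blockIndex T (n + 1)) (n + 1 - T (blockIndex T (n + 1))) = _
    rcases (show n + 1 ≤ _ from hhi).lt_or_eq with hlt | heq
    · rw [blockIndex_eq hT (hlo.trans n.le_succ) hlt]
      congr 1
      omega
    · have := hT_succ (blockIndex T n)
      rw [heq, blockIndex_apply hT, Nat.sub_self, hf0, hfL _ _ (by omega)]
  refine ⟨y, ?_, fun p => ?_⟩
  · refine squeeze_zero (fun _ => dist_nonneg) (fun n => ?_)
      ((tendsto_one_div_add_atTop_nhds_zero_nat).comp (tendsto_blockIndex hT))
    rw [hy_succ, dist_comm]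
    exact (hf _ _).le
  · rw [nhds_basis_ball.mapClusterPt_iff_frequently]
    intro ε hε
    obtain ⟨i, hi⟩ := hu.exists_dist_lt p hε
    refine frequently_atTop.2 fun M => ⟨T (Nat.pair i M),
      (Nat.right_le_pair i M).trans (hT.id_le _), ?_⟩
    rw [mem_ball, hy]
    simpa [blockIndex_apply hT, hf0, q, dist_comm] using hi

theorem EuclideanSpace.norm_le_sum_abs {ι : Type*} [Fintype ι] (v : EuclideanSpace ℝ ι) :
    ‖v‖ ≤ ∑ x, |v x| := by
  classical
  calc ‖v‖ = ‖∑ x, v x • EuclideanSpace.single x (1 : ℝ)‖ := by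
        simp_rw [← EuclideanSpace.basisFun_apply, ← EuclideanSpace.basisFun_repr ι ℝ v,
          (EuclideanSpace.basisFun ι ℝ).sum_repr]
    _ ≤ ∑ x, |v x| := (norm_sum_le _ _).trans_eq <| by simp [norm_smul]

section Cesaro

variable {Ω : Type*} [Fintype Ω]

theorem natCast_smul_cesaro (t : ℕ → EuclideanSpace ℝ Ω) (n : ℕ) :
    (n : ℝ) • cesaro t n = ∑ i ∈ range n, t i := by
  rcases eq_or_ne n 0 with rfl | hn
  · simp
  · rw [cesaro, smul_smul, mul_inv_cancel₀ (Nat.cast_ne_zero.2 hn), one_smul]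

theorem cesaro_succ_sub (t : ℕ → EuclideanSpace ℝ Ω) (n : ℕ) :
    cesaro t (n + 1) - cesaro t n = ((n : ℝ) + 1)⁻¹ • (t n - cesaro t n) := by
  have h := natCast_smul_cesaro t (n + 1)
  rw [sum_range_succ, ← natCast_smul_cesaro, Nat.cast_succ] at h
  rw [eq_inv_smul_iff₀ (Nat.cast_add_one_ne_zero n), smul_sub, h, add_smul, one_smul]
  abel

theorem norm_cesaro_le {t : ℕ → EuclideanSpace ℝ Ω} {C : ℝ} (hC : ∀ i, ‖t i‖ ≤ C) (n : ℕ) :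
    ‖cesaro t n‖ ≤ C := by
  have hC0 : 0 ≤ C := (norm_nonneg _).trans (hC 0)
  rcases eq_or_ne n 0 with rfl | hn
  · simpa [cesaro] using hC0
  have hn' : (0 : ℝ) < n := Nat.cast_pos.2 (Nat.pos_of_ne_zero hn)
  rw [cesaro, norm_smul, norm_inv, Real.norm_natCast, inv_mul_le_iff₀ hn']
  calc ‖∑ i ∈ range n, t i‖ ≤ ∑ i ∈ range n, C := norm_sum_le_of_le _ fun i _ => hC i
    _ = n * C := by simp

theorem tendsto_dist_cesaro_succ {t : ℕ → EuclideanSpace ℝ Ω} {C : ℝ} (hC : ∀ i, ‖t i‖ ≤ C) :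
    Tendsto (fun n => dist (cesaro t (n + 1)) (cesaro t n)) atTop (𝓝 0) := by
  refine squeeze_zero (fun _ => dist_nonneg) (fun n => ?_)
    ((tendsto_const_div_atTop_nhds_zero_nat (2 * C)).comp (tendsto_add_atTop_nat 1))
  rw [dist_eq_norm, cesaro_succ_sub, norm_smul, norm_inv, Function.comp_apply, Nat.cast_succ,
    Real.norm_of_nonneg (by positivity), inv_mul_eq_div]
  gcongr
  linarith [norm_sub_le (t n) (cesaro t n), hC n, norm_cesaro_le hC n]

theorem natCast_smul_cesaro_sub_of_eq {t : ℕ → EuclideanSpace ℝ Ω} {v : EuclideanSpace ℝ Ω}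
    {a n : ℕ} (han : a ≤ n) (hv : ∀ i, a ≤ i → i < n → t i = v) :
    (n : ℝ) • (cesaro t n - v) = (a : ℝ) • (cesaro t a - v) := by
  rw [smul_sub, smul_sub, natCast_smul_cesaro, natCast_smul_cesaro,
    ← sum_range_add_sum_Ico _ han, sum_congr rfl fun i hi => hv i (mem_Ico.1 hi).1 (mem_Ico.1 hi).2,
    sum_const, Nat.card_Ico, ← Nat.cast_smul_eq_nsmul ℝ, Nat.cast_sub han, sub_smul]
  abel

theorem Convex.cesaro_mem {s : Set (EuclideanSpace ℝ Ω)} (hs : Convex ℝ s)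
    {t : ℕ → EuclideanSpace ℝ Ω} (ht : ∀ i, t i ∈ s) {n : ℕ} (hn : n ≠ 0) : cesaro t n ∈ s := by
  have := hs.centerMass_mem (t := range n) (w := fun _ => 1) (z := t) (fun _ _ => zero_le_one)
    (by simpa using Nat.pos_of_ne_zero hn) fun i _ => ht i
  simpa [centerMass, cesaro] using this

end Cesaro

section Simplex

variable {Ω : Type*} [Fintype Ω]

theorem isCompact_probVec : IsCompact (probVec Ω) :=
  (PiLp.homeomorph 2 fun _ : Ω => ℝ).isCompact_preimage.2 (isCompact_stdSimplex ℝ Ω)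

theorem convex_probVec : Convex ℝ (probVec Ω) :=
  (convex_stdSimplex ℝ Ω).linear_preimage (WithLp.linearEquiv 2 ℝ (Ω → ℝ)).toLinearMap

theorem norm_le_one_of_mem_probVec {p : EuclideanSpace ℝ Ω} (hp : p ∈ probVec Ω) : ‖p‖ ≤ 1 :=
  (EuclideanSpace.norm_le_sum_abs p).trans_eq <| by simp_rw [abs_of_nonneg (hp.1 _), hp.2]

theorem nonempty_of_mem_probVec {p : EuclideanSpace ℝ Ω} (hp : p ∈ probVec Ω) : Nonempty Ω := by
  by_contra h
  simpa [not_nonempty_iff.1 h] using hp.2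

variable [DecidableEq Ω]

theorem single_mem_probVec (x : Ω) : EuclideanSpace.single x (1 : ℝ) ∈ probVec Ω :=
  single_mem_stdSimplex ℝ x

theorem relFreq_eq_cesaro (ω : ℕ → Ω) :
    relFreq ω = cesaro fun i => EuclideanSpace.single (ω i) (1 : ℝ) := by
  ext n x
  simp [relFreq, cesaro, Pi.single_apply, sum_boole, div_eq_inv_mul, eq_comm]

theorem tendsto_dist_relFreq_succ (ω : ℕ → Ω) :
    Tendsto (fun n => dist (relFreq ω (n + 1)) (relFreq ω n)) atTop (𝓝 0) := by
  rw [relFreq_eq_cesaro]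
  exact tendsto_dist_cesaro_succ (C := 1) fun i => by simp [PiLp.norm_single]

theorem relFreq_mem_probVec (ω : ℕ → Ω) {n : ℕ} (hn : n ≠ 0) : relFreq ω n ∈ probVec Ω := by
  rw [relFreq_eq_cesaro]
  exact convex_probVec.cesaro_mem (fun i => single_mem_probVec (ω i)) hn

end Simplex

section CesaroBlocks

variable {Ω : Type*} [Fintype Ω] {y : ℕ → EuclideanSpace ℝ Ω} {T : ℕ → ℕ}

theorem dist_cesaro_comp_blockIndex_le (hy : ∀ j, ‖y j‖ ≤ 1) (hT : StrictMono T) {i n : ℕ}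
    (h₁ : T (i + 1) ≤ n) (h₂ : n < T (i + 2)) :
    dist (cesaro (y ∘ blockIndex T) n) (y (i + 1)) ≤
      2 * ((T i : ℝ) / T (i + 1)) + dist (y (i + 1)) (y i) := by
  set c := cesaro (y ∘ blockIndex T)
  have hTpos : (0 : ℝ) < T (i + 1) := Nat.cast_pos.2 ((Nat.zero_le _).trans_lt (hT i.lt_succ_self))
  -- on `[T (i+1), n)` the averaged sequence is constant `y (i+1)`, on `[T i, T (i+1))` it is `y i`
  have hcur : (n : ℝ) • (c n - y (i + 1)) = (T (i + 1) : ℝ) • (c (T (i + 1)) - y (i + 1)) :=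
    natCast_smul_cesaro_sub_of_eq h₁ fun k hk₁ hk₂ => by
      simp [blockIndex_eq hT hk₁ (hk₂.trans h₂)]
  have hprev : (T (i + 1) : ℝ) • (c (T (i + 1)) - y i) = (T i : ℝ) • (c (T i) - y i) :=
    natCast_smul_cesaro_sub_of_eq (hT i.lt_succ_self).le fun k hk₁ hk₂ => by
      simp [blockIndex_eq hT hk₁ hk₂]
  have hcur' : ‖c n - y (i + 1)‖ ≤ ‖c (T (i + 1)) - y (i + 1)‖ := by
    have := congrArg norm hcur
    simp only [norm_smul, Real.norm_natCast] at this
    refine le_of_mul_le_mul_left ?_ hTpos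
    calc (T (i + 1) : ℝ) * ‖c n - y (i + 1)‖ ≤ n * ‖c n - y (i + 1)‖ :=
          mul_le_mul_of_nonneg_right (Nat.cast_le.2 h₁) (norm_nonneg _)
      _ = _ := this
  have hprev' : ‖c (T (i + 1)) - y i‖ ≤ 2 * ((T i : ℝ) / T (i + 1)) := by
    have := congrArg norm hprev
    simp only [norm_smul, Real.norm_natCast] at this
    have hc : ‖c (T i)‖ ≤ 1 := norm_cesaro_le (fun j => hy _) _
    calc ‖c (T (i + 1)) - y i‖ = T i * ‖c (T i) - y i‖ / T (i + 1) :=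
          eq_div_of_mul_eq hTpos.ne' (by rw [mul_comm, this])
      _ ≤ T i * 2 / T (i + 1) := by
          gcongr
          linarith [norm_sub_le (c (T i)) (y i), hy i]
      _ = 2 * ((T i : ℝ) / T (i + 1)) := by ring
  calc dist (c n) (y (i + 1)) ≤ dist (c (T (i + 1))) (y (i + 1)) := by
        simpa only [dist_eq_norm] using hcur'
    _ ≤ dist (c (T (i + 1))) (y i) + dist (y i) (y (i + 1)) := dist_triangle _ _ _
    _ ≤ _ := add_le_add (by rwa [dist_eq_norm]) (dist_comm _ _).le

theorem tendsto_dist_cesaro_comp_blockIndex (hy : ∀ j, ‖y j‖ ≤ 1) (hT : StrictMono T)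
    (hratio : Tendsto (fun j => (T j : ℝ) / T (j + 1)) atTop (𝓝 0))
    (hstep : Tendsto (fun j => dist (y (j + 1)) (y j)) atTop (𝓝 0)) :
    Tendsto (fun n => dist (cesaro (y ∘ blockIndex T) n) (y (blockIndex T n))) atTop (𝓝 0) := by
  have hg : Tendsto (fun n => 2 * ((T (blockIndex T n - 1) : ℝ) / T (blockIndex T n - 1 + 1)) +
      dist (y (blockIndex T n - 1 + 1)) (y (blockIndex T n - 1))) atTop (𝓝 0) := by
    simpa only [mul_zero, add_zero, Function.comp_def] using ((hratio.const_mul 2).add hstep).comp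
      ((tendsto_sub_atTop_nat 1).comp (tendsto_blockIndex hT))
  refine squeeze_zero' (Eventually.of_forall fun _ => dist_nonneg) ?_ hg
  filter_upwards [eventually_ge_atTop (T 1)] with n hn
  have hj : 1 ≤ blockIndex T n := le_blockIndex hT hn
  obtain ⟨h₁, h₂⟩ := blockIndex_spec hT ((hT.monotone (Nat.zero_le 1)).trans hn)
  rw [← Nat.sub_add_cancel hj] at h₁ h₂ ⊢
  exact dist_cesaro_comp_blockIndex_le hy hT h₁ h₂

end CesaroBlocks

theorem exists_clusterPts_cesaro_eq {Ω : Type*} [Fintype Ω] {N : Set (EuclideanSpace ℝ Ω)}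
    (hne : N.Nonempty) (hclosed : IsClosed N) (hconn : IsPreconnected N) (hsub : N ⊆ probVec Ω) :
    ∃ t : ℕ → EuclideanSpace ℝ Ω, (∀ i, t i ∈ probVec Ω) ∧ clusterPts (cesaro t) = N := by
  have := hne.to_subtype
  have := Subtype.preconnectedSpace hconn
  obtain ⟨y, hstep, hclu⟩ := exists_seq_tendsto_dist_succ_forall_mapClusterPt N
  set T : ℕ → ℕ := fun j => (j + 1).factorial
  have hT : StrictMono T := fun a b hab => (Nat.factorial_lt a.succ_pos).2 (by omega)
  have hratio : Tendsto (fun j => (T j : ℝ) / T (j + 1)) atTop (𝓝 0) := by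
    refine (tendsto_one_div_add_atTop_nhds_zero_nat.comp (tendsto_add_atTop_nat 1)).congr
      fun j => ?_
    simp only [T, Function.comp_apply, Nat.factorial_succ (j + 1)]
    push_cast
    field_simp
  refine ⟨(fun j => (y j : EuclideanSpace ℝ Ω)) ∘ blockIndex T, fun n => hsub (y _).2, ?_⟩
  rw [clusterPts_eq_of_tendsto_dist (tendsto_dist_cesaro_comp_blockIndex
    (fun j => norm_le_one_of_mem_probVec (hsub (y j).2)) hT hratio hstep)]
  ext p
  refine ⟨fun hp => hclosed.mem_of_mapClusterPt hp (Eventually.of_forall fun n => (y _).2),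
    fun hp => MapClusterPt.of_comp hT.tendsto_atTop ?_⟩
  simpa [Function.comp_def, blockIndex_apply hT] using
    (hclu ⟨p, hp⟩).continuousAt_comp continuous_subtype_val.continuousAt

noncomputable section Greedy

variable {Ω : Type*} [Fintype Ω] [Nonempty Ω]

def argmaxCoord (v : EuclideanSpace ℝ Ω) : Ω := (Finite.exists_max fun x => v x).choose

theorem le_apply_argmaxCoord (v : EuclideanSpace ℝ Ω) (x : Ω) : v x ≤ v (argmaxCoord v) :=
  (Finite.exists_max fun x => v x).choose_spec x

variable [DecidableEq Ω]

/-- The greedy rule emits the symbol whose accumulated target mass exceeds its count by the most;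
`greedyDeficit t n` is the vector of these excesses after `n` steps. -/
def greedyDeficit (t : ℕ → EuclideanSpace ℝ Ω) : ℕ → EuclideanSpace ℝ Ω
  | 0 => 0
  | n + 1 => greedyDeficit t n + t n -
      EuclideanSpace.single (argmaxCoord (greedyDeficit t n + t n)) 1

def greedySeq (t : ℕ → EuclideanSpace ℝ Ω) (n : ℕ) : Ω := argmaxCoord (greedyDeficit t n + t n)

variable {t : ℕ → EuclideanSpace ℝ Ω}

theorem greedyDeficit_eq_sum (t : ℕ → EuclideanSpace ℝ Ω) (n : ℕ) :
    greedyDeficit t n = ∑ i ∈ range n, (t i - EuclideanSpace.single (greedySeq t i) 1) := by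
  induction n with
  | zero => rfl
  | succ n ih => rw [sum_range_succ, ← ih, greedyDeficit, greedySeq, add_sub_assoc]

theorem sum_greedyDeficit (ht : ∀ i, t i ∈ probVec Ω) (n : ℕ) : ∑ x, greedyDeficit t n x = 0 := by
  induction n with
  | zero => simp [greedyDeficit]
  | succ n ih => simp [greedyDeficit, sum_add_distrib, ih, (ht n).2, PiLp.single_apply]

theorem neg_one_le_greedyDeficit (ht : ∀ i, t i ∈ probVec Ω) (n : ℕ) (x : Ω) :
    -1 ≤ greedyDeficit t n x := by
  induction n generalizing x with
  | zero => simp [greedyDeficit]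
  | succ n ih =>
    set w := greedyDeficit t n + t n
    have hw : ∀ x, w x = greedyDeficit t n x + t n x := fun x => PiLp.add_apply _ _ _ x
    have hsum : ∑ x, w x = 1 := by
      simp only [hw, sum_add_distrib, sum_greedyDeficit ht, (ht n).2, zero_add]
    have hmax : 0 < w (argmaxCoord w) := by
      by_contra! h
      have := sum_le_sum fun x (_ : x ∈ Finset.univ) => (le_apply_argmaxCoord w x).trans h
      rw [hsum, sum_const_zero] at this
      linarith
    have hsucc : greedyDeficit t (n + 1) x = w x - if x = argmaxCoord w then 1 else 0 := by
      simp [greedyDeficit, w, PiLp.single_apply]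
    rw [hsucc]
    split_ifs with hx
    · rw [hx]
      linarith
    · linarith [hw x, ih x, (ht n).1 x]

theorem norm_greedyDeficit_le (ht : ∀ i, t i ∈ probVec Ω) (n : ℕ) :
    ‖greedyDeficit t n‖ ≤ 2 * Fintype.card Ω := by
  calc ‖greedyDeficit t n‖ ≤ ∑ x, |greedyDeficit t n x| := EuclideanSpace.norm_le_sum_abs _
    _ ≤ ∑ x, (greedyDeficit t n x + 2) := sum_le_sum fun x _ => by
        have := neg_one_le_greedyDeficit ht n x
        exact abs_le.2 ⟨by linarith, by linarith⟩
    _ = 2 * Fintype.card Ω := by simp [sum_add_distrib, sum_greedyDeficit ht, mul_comm]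

theorem cesaro_sub_relFreq_greedySeq (t : ℕ → EuclideanSpace ℝ Ω) (n : ℕ) :
    cesaro t n - relFreq (greedySeq t) n = (n : ℝ)⁻¹ • greedyDeficit t n := by
  rw [relFreq_eq_cesaro, greedyDeficit_eq_sum, cesaro, cesaro, ← smul_sub, ← sum_sub_distrib]

theorem clusterPts_relFreq_greedySeq (ht : ∀ i, t i ∈ probVec Ω) :
    clusterPts (relFreq (greedySeq t)) = clusterPts (cesaro t) := by
  refine clusterPts_eq_of_tendsto_dist <| squeeze_zero (fun _ => dist_nonneg) (fun n => ?_)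
    (tendsto_const_div_atTop_nhds_zero_nat (2 * Fintype.card Ω : ℝ))
  rw [dist_comm, dist_eq_norm, cesaro_sub_relFreq_greedySeq, norm_smul, norm_inv,
    Real.norm_natCast, inv_mul_eq_div]
  exact div_le_div_of_nonneg_right (norm_greedyDeficit_le ht n) n.cast_nonneg

end Greedy

theorem stmt6_general {Ω : Type*} [Fintype Ω] [DecidableEq Ω]
    (N : Set (EuclideanSpace ℝ Ω)) :
    (∃ ω : ℕ → Ω, clusterPts (relFreq ω) = N) ↔
      (N.Nonempty ∧ IsClosed N ∧ IsConnected N ∧ N ⊆ probVec Ω) := by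
  constructor
  · rintro ⟨ω, rfl⟩
    have hmem : ∀ᶠ n in atTop, relFreq ω n ∈ probVec Ω :=
      eventually_atTop.2 ⟨1, fun n hn => relFreq_mem_probVec ω (by omega)⟩
    have hconn := isConnected_clusterPts_of_tendsto_dist_succ isCompact_probVec hmem
      (tendsto_dist_relFreq_succ ω)
    exact ⟨hconn.nonempty, isClosed_clusterPts _, hconn,
      fun p hp => isCompact_probVec.isClosed.mem_of_mapClusterPt hp hmem⟩
  · rintro ⟨hne, hclosed, hconn, hsub⟩
    have : Nonempty Ω := nonempty_of_mem_probVec (hsub hne.some_mem)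
    obtain ⟨t, ht, htN⟩ := exists_clusterPts_cesaro_eq hne hclosed hconn.isPreconnected hsub
    exact ⟨greedySeq t, (clusterPts_relFreq_greedySeq ht).trans htN⟩

/-- A set `N ⊆ Δ^k` arises as the set of cluster points of the relative
frequencies of some data sequence if and only if `N` is a nonempty closed connected subset
of the simplex. -/
theorem stmt6 {Ω : Type*} [Fintype Ω] [DecidableEq Ω] (hcard : 1 < Fintype.card Ω)
    (N : Set (EuclideanSpace ℝ Ω)) :
    (∃ ω : ℕ → Ω, clusterPts (relFreq ω) = N) ↔
      (N.Nonempty ∧ IsClosed N ∧ IsConnected N ∧ N ⊆ probVec Ω) :=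
  stmt6_general N
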